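/- arXiv:2303.05850 — 10 statements merged into one kernel-verified Lean document; each statement's English description precedes it below -/
import Mathlib

section
/- Let A, B be nonempty subsets of a metric space (X, ρ). If the ordered pair (A, B) satisfies the BUC property, then (A, B) satisfies the UC* property. -/
open Filter Topology

/-- dist(A,B) = inf{ρ(a,b) : a ∈ A, b ∈ B}. -/
noncomputable def SetDist {X : Type*} [MetricSpace X] (A B : Set X) : ℝ :=
  sInf (Set.image2 dist A B)

/-- A bounded sequence in a metric space. -/
def BoundedSeq {X : Type*} [MetricSpace X] (u : ℕ → X) : Prop :=
  ∃ (p : X) (R : ℝ), ∀ n, dist (u n) p ≤ R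

/-- The ordered pair (A,B) satisfies the UC property. -/
def UCprop {X : Type*} [MetricSpace X] (A B : Set X) : Prop :=
  ∀ (x z : ℕ → X) (y : ℕ → X), (∀ n, x n ∈ A) → (∀ n, z n ∈ A) → (∀ n, y n ∈ B) →
    Tendsto (fun n => dist (x n) (y n)) atTop (𝓝 (SetDist A B)) →
    Tendsto (fun n => dist (z n) (y n)) atTop (𝓝 (SetDist A B)) →
    Tendsto (fun n => dist (x n) (z n)) atTop (𝓝 0)

/-- The ordered pair (A,B) satisfies the bounded UC (BUC) property. -/
def BUCprop {X : Type*} [MetricSpace X] (A B : Set X) : Prop :=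
  ∀ (x z : ℕ → X) (y : ℕ → X), (∀ n, x n ∈ A) → (∀ n, z n ∈ A) → (∀ n, y n ∈ B) →
    BoundedSeq x → BoundedSeq z →
    Tendsto (fun n => dist (x n) (y n)) atTop (𝓝 (SetDist A B)) →
    Tendsto (fun n => dist (z n) (y n)) atTop (𝓝 (SetDist A B)) →
    Tendsto (fun n => dist (x n) (z n)) atTop (𝓝 0)

/-- The ordered pair (A,B) satisfies the UC* property. -/
def UCstarProp {X : Type*} [MetricSpace X] (A B : Set X) : Prop :=
  ∀ (x z : ℕ → X) (y : ℕ → X), (∀ n, x n ∈ A) → (∀ n, z n ∈ A) → (∀ n, y n ∈ B) →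
    Tendsto (fun n => dist (z n) (y n)) atTop (𝓝 (SetDist A B)) →
    (∀ ε > 0, ∃ N : ℕ, ∀ m n : ℕ, N ≤ n → n < m → dist (x m) (y n) ≤ SetDist A B + ε) →
    ∀ ε > 0, ∃ N₁ : ℕ, ∀ m n : ℕ, N₁ ≤ n → n < m → dist (x m) (z n) ≤ ε


lemma bdd_of_tail {X : Type*} [MetricSpace X] (u : ℕ → X) (p : X) (M : ℕ) (C : ℝ)
    (h : ∀ m, M ≤ m → dist (u m) p ≤ C) : BoundedSeq u := by
  have hfin : ∃ R : ℝ, ∀ m < M, dist (u m) p ≤ R := by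
    clear h
    induction M with
    | zero => exact ⟨0, fun m hm => absurd hm (Nat.not_lt_zero m)⟩
    | succ M ih =>
      obtain ⟨R, hR⟩ := ih
      refine ⟨max R (dist (u M) p), fun m hm => ?_⟩
      rcases Nat.lt_succ_iff_lt_or_eq.mp hm with hm' | hm'
      · exact le_trans (hR m hm') (le_max_left _ _)
      · subst hm'; exact le_max_right _ _
  obtain ⟨R, hR⟩ := hfin
  refine ⟨p, max R C, fun m => ?_⟩
  rcases lt_or_ge m M with hm | hm
  · exact le_trans (hR m hm) (le_max_left _ _)
  · exact le_trans (h m hm) (le_max_right _ _)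

theorem stmt1 {X : Type*} [MetricSpace X] (A B : Set X) (hA : A.Nonempty) (hB : B.Nonempty)
    (h : BUCprop A B) : UCstarProp A B := by
  intro x z y hx hz hy hzy hxy ε hε
  by_contra hcon
  push_neg at hcon
  set d := SetDist A B with hd
  have hlow : ∀ a ∈ A, ∀ b ∈ B, d ≤ dist a b := by
    intro a ha b hb
    apply csInf_le
    · refine ⟨0, ?_⟩
      rintro r ⟨a', _, b', _, rfl⟩
      exact dist_nonneg
    · exact Set.mem_image2_of_mem ha hb
  obtain ⟨N₀, hN₀⟩ := hxy 1 one_pos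
  -- x is bounded
  have hxbdd : BoundedSeq x := by
    refine bdd_of_tail x (y N₀) (N₀ + 1) (d + 1) (fun m hm => ?_)
    exact hN₀ m N₀ le_rfl (Nat.lt_of_succ_le hm)
  -- y tail is bounded
  have hybdd : ∀ n, N₀ ≤ n → dist (y n) (y N₀) ≤ 2 * (d + 1) := by
    intro n hn
    have h1 : dist (x (n + 1)) (y n) ≤ d + 1 := hN₀ (n + 1) n hn (Nat.lt_succ_self n)
    have h2 : dist (x (n + 1)) (y N₀) ≤ d + 1 := hN₀ (n + 1) N₀ le_rfl (Nat.lt_succ_of_le hn)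
    calc dist (y n) (y N₀) ≤ dist (y n) (x (n + 1)) + dist (x (n + 1)) (y N₀) := dist_triangle _ _ _
      _ ≤ (d + 1) + (d + 1) := by rw [dist_comm]; exact add_le_add h1 h2
      _ = 2 * (d + 1) := by ring
  -- z is bounded
  have hzev : ∀ᶠ k in atTop, dist (z k) (y k) < d + 1 :=
    hzy.eventually_lt_const (by linarith)
  obtain ⟨N₂, hN₂⟩ := eventually_atTop.mp hzev
  have hzbdd : BoundedSeq z := by
    refine bdd_of_tail z (y N₀) (max N₀ N₂) (3 * (d + 1)) (fun k hk => ?_)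
    have hk1 : N₀ ≤ k := le_trans (le_max_left _ _) hk
    have hk2 : N₂ ≤ k := le_trans (le_max_right _ _) hk
    calc dist (z k) (y N₀) ≤ dist (z k) (y k) + dist (y k) (y N₀) := dist_triangle _ _ _
      _ ≤ (d + 1) + 2 * (d + 1) := add_le_add (le_of_lt (hN₂ k hk2)) (hybdd k hk1)
      _ = 3 * (d + 1) := by ring
  -- extract bad subsequences
  choose m n hn hmn hbig using hcon
  have hnTop : Tendsto n atTop atTop := tendsto_atTop_mono hn tendsto_id
  have hZY : Tendsto (fun k => dist (z (n k)) (y (n k))) atTop (𝓝 d) := hzy.comp hnTop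
  have hXY : Tendsto (fun k => dist (x (m k)) (y (n k))) atTop (𝓝 d) := by
    rw [Metric.tendsto_atTop]
    intro δ hδ
    obtain ⟨N, hN⟩ := hxy (δ / 2) (by linarith)
    refine ⟨N, fun k hk => ?_⟩
    have hup : dist (x (m k)) (y (n k)) ≤ d + δ / 2 :=
      hN (m k) (n k) (le_trans hk (hn k)) (hmn k)
    have hlo : d ≤ dist (x (m k)) (y (n k)) := hlow _ (hx _) _ (hy _)
    rw [Real.dist_eq, abs_lt]
    constructor <;> linarith
  have hXbdd : BoundedSeq (fun k => x (m k)) := by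
    obtain ⟨p, R, hR⟩ := hxbdd
    exact ⟨p, R, fun k => hR (m k)⟩
  have hZbdd : BoundedSeq (fun k => z (n k)) := by
    obtain ⟨p, R, hR⟩ := hzbdd
    exact ⟨p, R, fun k => hR (n k)⟩
  have hfin : Tendsto (fun k => dist (x (m k)) (z (n k))) atTop (𝓝 0) :=
    h (fun k => x (m k)) (fun k => z (n k)) (fun k => y (n k))
      (fun k => hx _) (fun k => hz _) (fun k => hy _) hXbdd hZbdd hXY hZY
  obtain ⟨k, hk⟩ := (hfin.eventually_lt_const hε).exists
  exact absurd (hbig k) (not_lt.mpr hk.le)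
end

section
/- Let A, B be nonempty subsets of a metric space (X, ρ). If the ordered pair (A, B) satisfies the UC property, then (A, B) satisfies the UC* property. -/
open Filter Topology

theorem stmt2 {X : Type*} [MetricSpace X] (A B : Set X) (hA : A.Nonempty) (hB : B.Nonempty)
    (h : UCprop A B) : UCstarProp A B := by
  intro x z y hxA hzA hyB hzy hx ε hε
  by_contra hcon
  push_neg at hcon
  choose m n hn hmn hd using hcon
  set d := SetDist A B with hdef
  have hbdd : BddBelow (Set.image2 dist A B) := by
    refine ⟨0, ?_⟩
    rintro r ⟨a, _, b, _, rfl⟩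
    exact dist_nonneg
  have hld : ∀ a ∈ A, ∀ b ∈ B, d ≤ dist a b := fun a ha b hb =>
    csInf_le hbdd ⟨a, ha, b, hb, rfl⟩
  have hnk : Tendsto n atTop atTop := tendsto_atTop_mono hn tendsto_id
  have h1 : Tendsto (fun k => dist (z (n k)) (y (n k))) atTop (𝓝 d) := hzy.comp hnk
  have h2 : Tendsto (fun k => dist (x (m k)) (y (n k))) atTop (𝓝 d) := by
    rw [Metric.tendsto_atTop]
    intro δ hδ
    obtain ⟨N, hN⟩ := hx (δ / 2) (by linarith)
    refine ⟨N, fun k hk => ?_⟩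
    have hub := hN (m k) (n k) (le_trans hk (hn k)) (hmn k)
    have hlb := hld (x (m k)) (hxA (m k)) (y (n k)) (hyB (n k))
    rw [Real.dist_eq, abs_lt]
    constructor <;> linarith
  have h3 := h (fun k => x (m k)) (fun k => z (n k)) (fun k => y (n k))
    (fun k => hxA (m k)) (fun k => hzA (n k)) (fun k => hyB (n k)) h2 h1
  have h4 : ∀ᶠ k in atTop, dist (x (m k)) (z (n k)) < ε := by
    have := h3 (Metric.ball_mem_nhds 0 hε)
    filter_upwards [this] with k hk
    simpa [Real.dist_eq, abs_lt] using hk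
  obtain ⟨k, hk⟩ := h4.exists
  exact absurd (hd k) (not_lt.2 hk.le)
end

section
/- Let (X, ρ) be a metric space, A, B ⊂ X, and let T : A ∪ B → A ∪ B be a cyclic map (T(A) ⊆ B, T(B) ⊆ A) satisfying ρ(Tx, Ty) ≤ λ·max{ρ(x,y), ρ(x,Tx), ρ(y,Ty)} + (1−λ)·dist(A,B) for all x ∈ A, y ∈ B, where λ ∈ [0,1). Then for every x ∈ A ∪ B, the iterated sequence {T^n x} satisfies sup_{n∈ℕ} ρ(T^n x, T^{n−1} x) = ρ(Tx, x). -/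
open Filter Topology

lemma setDist_le {X : Type*} [MetricSpace X] {A B : Set X} {a b : X}
    (ha : a ∈ A) (hb : b ∈ B) : SetDist A B ≤ dist a b := by
  apply csInf_le
  · exact ⟨0, fun r hr => by
      obtain ⟨u, hu, v, hv, rfl⟩ := hr
      exact dist_nonneg⟩
  · exact ⟨a, ha, b, hb, rfl⟩

lemma key_step {X : Type*} [MetricSpace X] {A B : Set X} {T : X → X}
    (hTA : ∀ x ∈ A, T x ∈ B) (hTB : ∀ y ∈ B, T y ∈ A)
    {lam : ℝ} (hlam1 : lam < 1)
    (hT : ∀ x ∈ A, ∀ y ∈ B, dist (T x) (T y) ≤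
      lam * max (dist x y) (max (dist x (T x)) (dist y (T y))) + (1 - lam) * SetDist A B)
    {z : X} (hz : z ∈ A ∪ B) :
    dist (T (T z)) (T z) ≤ dist (T z) z ∧ T z ∈ A ∪ B := by
  rcases hz with hz | hz
  · refine ⟨?_, Or.inr (hTA z hz)⟩
    have h := hT z hz (T z) (hTA z hz)
    have hD : SetDist A B ≤ dist z (T z) := setDist_le hz (hTA z hz)
    set a := dist z (T z) with ha
    set b := dist (T z) (T (T z)) with hb
    rw [dist_comm (T (T z)) (T z), dist_comm (T z) z, ← hb, ← ha]
    have hmax : max a (max a b) = max a b := by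
      rcases le_total a b with h' | h' <;> simp [max_eq_right, max_eq_left, h']
    rw [hmax] at h
    rcases le_total b a with h' | h'
    · exact h'
    · -- b ≤ lam * b + (1-lam) * D ≤ lam * b + (1-lam) * a, so b ≤ a
      rw [max_eq_right h'] at h
      nlinarith [hD, h']
  · refine ⟨?_, Or.inl (hTB z hz)⟩
    have h := hT (T z) (hTB z hz) z hz
    have hD : SetDist A B ≤ dist (T z) z := setDist_le (hTB z hz) hz
    set a := dist (T z) z with ha
    set b := dist (T (T z)) (T z) with hb
    rw [dist_comm (T z) (T (T z)), dist_comm z (T z), ← hb] at h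
    rw [← ha, ← hb] at *
    have hmax : max a (max b a) = max a b := by
      rcases le_total a b with h' | h' <;> simp [max_eq_right, max_eq_left, h', max_comm]
    rw [hmax] at h
    rcases le_total b a with h' | h'
    · exact h'
    · rw [max_eq_right h'] at h
      nlinarith [hD, h']

theorem stmt4 {X : Type*} [MetricSpace X] (A B : Set X) (T : X → X)
    (hTA : ∀ x ∈ A, T x ∈ B) (hTB : ∀ y ∈ B, T y ∈ A)
    (lam : ℝ) (hlam0 : 0 ≤ lam) (hlam1 : lam < 1)
    (hT : ∀ x ∈ A, ∀ y ∈ B, dist (T x) (T y) ≤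
      lam * max (dist x y) (max (dist x (T x)) (dist y (T y))) + (1 - lam) * SetDist A B)
    (x : X) (hx : x ∈ A ∪ B) :
    IsLUB (Set.range fun n : ℕ => dist (T^[n + 1] x) (T^[n] x)) (dist (T x) x) := by
  have main : ∀ n : ℕ, dist (T^[n + 1] x) (T^[n] x) ≤ dist (T x) x ∧ T^[n] x ∈ A ∪ B := by
    intro n
    induction n with
    | zero => exact ⟨le_refl _, hx⟩
    | succ k ih =>
      obtain ⟨ihd, ihm⟩ := ih
      obtain ⟨hstep, hmem⟩ := key_step hTA hTB hlam1 hT ihm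
      constructor
      · calc dist (T^[k + 1 + 1] x) (T^[k + 1] x)
            = dist (T (T (T^[k] x))) (T (T^[k] x)) := by
              rw [Function.iterate_succ_apply', Function.iterate_succ_apply']
          _ ≤ dist (T (T^[k] x)) (T^[k] x) := hstep
          _ = dist (T^[k+1] x) (T^[k] x) := by rw [Function.iterate_succ_apply']
          _ ≤ dist (T x) x := ihd
      · rw [Function.iterate_succ_apply']
        exact hmem
  constructor
  · rintro r ⟨n, rfl⟩
    exact (main n).1
  · intro w hw
    have := hw ⟨0, rfl⟩
    simpa using this
end

section
/- Let (X, ρ) be a metric space, A, B ⊂ X nonempty, and let T : A ∪ B → A ∪ B be a cyclic map (T(A) ⊆ B, T(B) ⊆ A) satisfying ρ(Tx, Ty) ≤ λ·max{ρ(x,y), ρ(x,Tx), ρ(y,Ty)} + (1−λ)·dist(A,B) for all x ∈ A, y ∈ B, where λ ∈ [0,1). Then for every x ∈ A ∪ B, the iterated sequence {T^n x}_{n≥1} is bounded. -/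
open Filter Topology

theorem stmt5 {X : Type*} [MetricSpace X] (A B : Set X) (hA : A.Nonempty) (hB : B.Nonempty)
    (T : X → X)
    (hTA : ∀ x ∈ A, T x ∈ B) (hTB : ∀ y ∈ B, T y ∈ A)
    (lam : ℝ) (hlam0 : 0 ≤ lam) (hlam1 : lam < 1)
    (hT : ∀ x ∈ A, ∀ y ∈ B, dist (T x) (T y) ≤
      lam * max (dist x y) (max (dist x (T x)) (dist y (T y))) + (1 - lam) * SetDist A B)
    (x : X) (hx : x ∈ A ∪ B) :
    ∃ (p : X) (R : ℝ), ∀ n : ℕ, 1 ≤ n → dist (T^[n] x) p ≤ R := by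
  set D := SetDist A B with hDdef
  have hDnn : 0 ≤ D := by
    apply Real.sInf_nonneg
    rintro r ⟨a, _, b, _, rfl⟩
    exact dist_nonneg
  have hlam1' : (0:ℝ) < 1 - lam := by linarith
  have hmem : ∀ k, T^[k] x ∈ A ∪ B := by
    intro k
    induction k with
    | zero => exact hx
    | succ k ih =>
      rw [Function.iterate_succ_apply']
      rcases ih with h | h
      · exact Or.inr (hTA _ h)
      · exact Or.inl (hTB _ h)
  have key : ∀ a b : ℕ, T^[a] x ∈ A → T^[b] x ∈ B →
      dist (T^[a+1] x) (T^[b+1] x) ≤ lam * max (dist (T^[a] x) (T^[b] x))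
        (max (dist (T^[a] x) (T^[a+1] x)) (dist (T^[b] x) (T^[b+1] x))) + (1 - lam) * D := by
    intro a b ha hb
    have := hT _ ha _ hb
    simpa [Function.iterate_succ_apply'] using this
  have key' : ∀ a b : ℕ, ((T^[a] x ∈ A ∧ T^[b] x ∈ B) ∨ (T^[b] x ∈ A ∧ T^[a] x ∈ B)) →
      dist (T^[a+1] x) (T^[b+1] x) ≤ lam * max (dist (T^[a] x) (T^[b] x))
        (max (dist (T^[a] x) (T^[a+1] x)) (dist (T^[b] x) (T^[b+1] x))) + (1 - lam) * D := by
    intro a b h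
    rcases h with ⟨ha, hb⟩ | ⟨hb, ha⟩
    · exact key a b ha hb
    · calc dist (T^[a+1] x) (T^[b+1] x) = dist (T^[b+1] x) (T^[a+1] x) := dist_comm _ _
        _ ≤ lam * max (dist (T^[b] x) (T^[a] x))
            (max (dist (T^[b] x) (T^[b+1] x)) (dist (T^[a] x) (T^[a+1] x))) + (1 - lam) * D :=
          key b a hb ha
        _ = lam * max (dist (T^[a] x) (T^[b] x))
            (max (dist (T^[a] x) (T^[a+1] x)) (dist (T^[b] x) (T^[b+1] x))) + (1 - lam) * D := by
          rw [dist_comm (T^[b] x) (T^[a] x), max_comm (dist (T^[b] x) (T^[b+1] x))]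
  have hstep : ∀ k : ℕ, (T^[k] x ∈ A ∧ T^[k+1] x ∈ B) ∨ (T^[k+1] x ∈ A ∧ T^[k] x ∈ B) := by
    intro k
    rcases hmem k with h | h
    · exact Or.inl ⟨h, by rw [Function.iterate_succ_apply']; exact hTA _ h⟩
    · exact Or.inr ⟨by rw [Function.iterate_succ_apply']; exact hTB _ h, h⟩
  set d0 := dist (T^[0] x) (T^[1] x) with hd0def
  have hd0nn : 0 ≤ d0 := dist_nonneg
  set M := max d0 D with hMdef
  have hMnn : 0 ≤ M := le_trans hd0nn (le_max_left _ _)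
  have hDM : D ≤ M := le_max_right _ _
  have hd : ∀ k, dist (T^[k] x) (T^[k+1] x) ≤ M := by
    intro k
    induction k with
    | zero => exact le_max_left _ _
    | succ k ih =>
      have h1 := key' k (k+1) (hstep k)
      rw [← max_assoc, max_self] at h1
      rcases le_total (dist (T^[k+1] x) (T^[k+1+1] x)) (dist (T^[k] x) (T^[k+1] x)) with h | h
      · rw [max_eq_left h] at h1
        nlinarith [mul_le_mul_of_nonneg_left ih hlam0,
          mul_le_mul_of_nonneg_left hDM hlam1'.le]
      · rw [max_eq_right h] at h1
        nlinarith [h1, hDM, hlam1']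
  set R := D + (d0 + M) / (1 - lam) with hRdef
  have hRk : (1 - lam) * R = (1 - lam) * D + (d0 + M) := by
    rw [hRdef]; field_simp
  have hR0 : 0 ≤ R :=
    add_nonneg hDnn (div_nonneg (by linarith) hlam1'.le)
  have hMR : M ≤ d0 + R := by
    nlinarith [hRk, mul_nonneg hlam0 hMnn, mul_nonneg hlam1'.le hd0nn, hDnn, hd0nn]
  have hfin1 : ∀ u : ℝ, u ≤ d0 + R → lam * u + (1 - lam) * D ≤ R := by
    intro u hu
    nlinarith [mul_le_mul_of_nonneg_left hu hlam0, hRk, mul_nonneg hlam1'.le hd0nn, hMnn]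
  have hfin2 : ∀ u : ℝ, u ≤ d0 + R → lam * u + (1 - lam) * D + M ≤ R := by
    intro u hu
    nlinarith [mul_le_mul_of_nonneg_left hu hlam0, hRk, mul_nonneg hlam1'.le hd0nn]
  -- main claim by induction on n bounding i + j
  have main : ∀ n : ℕ, ∀ i j : ℕ, 1 ≤ i → 1 ≤ j → i + j ≤ n →
      dist (T^[i] x) (T^[j] x) ≤ R := by
    intro n
    induction n with
    | zero => intro i j hi hj hij; omega
    | succ n IH =>
      intro i j hi hj hij
      -- auxiliary bound allowing index 0
      have haux : ∀ a b : ℕ, a + b + 2 ≤ n + 1 → dist (T^[a] x) (T^[b] x) ≤ d0 + R := by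
        intro a b hab
        match a, b with
        | 0, 0 => simpa using add_nonneg hd0nn hR0
        | 0, (b+1) =>
          calc dist (T^[0] x) (T^[b+1] x)
              ≤ dist (T^[0] x) (T^[1] x) + dist (T^[1] x) (T^[b+1] x) := dist_triangle _ _ _
            _ ≤ d0 + R := by
              have := IH 1 (b+1) (by omega) (by omega) (by omega)
              linarith
        | (a+1), 0 =>
          calc dist (T^[a+1] x) (T^[0] x)
              ≤ dist (T^[a+1] x) (T^[1] x) + dist (T^[1] x) (T^[0] x) := dist_triangle _ _ _
            _ ≤ d0 + R := by
              have h1 := IH (a+1) 1 (by omega) (by omega) (by omega)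
              have h2 : dist (T^[1] x) (T^[0] x) = d0 := dist_comm _ _
              linarith
        | (a+1), (b+1) =>
          have := IH (a+1) (b+1) (by omega) (by omega) (by omega)
          linarith
      -- core: i < j case
      have hcore : ∀ i j : ℕ, 1 ≤ i → i < j → i + j ≤ n + 1 →
          dist (T^[i] x) (T^[j] x) ≤ R := by
        intro i j hi hij' hsum
        obtain ⟨a, rfl⟩ : ∃ a, i = a + 1 := ⟨i - 1, by omega⟩
        obtain ⟨c, rfl⟩ : ∃ c, j = c + 1 + 1 := ⟨j - 2, by omega⟩
        -- bounds on the "max" ingredients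
        have hdA : dist (T^[a] x) (T^[a+1] x) ≤ d0 + R := le_trans (hd a) hMR
        have hdC : dist (T^[c] x) (T^[c+1] x) ≤ d0 + R := le_trans (hd c) hMR
        have hdC1 : dist (T^[c+1] x) (T^[c+1+1] x) ≤ d0 + R := le_trans (hd (c+1)) hMR
        rcases hmem a with ha | ha <;> rcases hmem c with hc | hc
        · -- x_a ∈ A, x_c ∈ A : x_{c+1} ∈ B, direct
          have hc1 : T^[c+1] x ∈ B := by
            rw [Function.iterate_succ_apply']; exact hTA _ hc
          have h1 := key' a (c+1) (Or.inl ⟨ha, hc1⟩)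
          have h2 : dist (T^[a] x) (T^[c+1] x) ≤ d0 + R := haux a (c+1) (by omega)
          have h3 : max (dist (T^[a] x) (T^[c+1] x))
              (max (dist (T^[a] x) (T^[a+1] x)) (dist (T^[c+1] x) (T^[c+1+1] x))) ≤ d0 + R :=
            max_le h2 (max_le hdA hdC1)
          calc dist (T^[a+1] x) (T^[c+1+1] x) ≤ _ := h1
            _ ≤ lam * (d0 + R) + (1 - lam) * D := by
              have := mul_le_mul_of_nonneg_left h3 hlam0; linarith
            _ ≤ R := hfin1 _ (le_refl _)
        · -- x_a ∈ A, x_c ∈ B : indirect via (a, c)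
          have h1 := key' a c (Or.inl ⟨ha, hc⟩)
          have h2 : dist (T^[a] x) (T^[c] x) ≤ d0 + R := haux a c (by omega)
          have h3 : max (dist (T^[a] x) (T^[c] x))
              (max (dist (T^[a] x) (T^[a+1] x)) (dist (T^[c] x) (T^[c+1] x))) ≤ d0 + R :=
            max_le h2 (max_le hdA hdC)
          have h4 : dist (T^[a+1] x) (T^[c+1+1] x)
              ≤ dist (T^[a+1] x) (T^[c+1] x) + dist (T^[c+1] x) (T^[c+1+1] x) :=
            dist_triangle _ _ _
          have h5 := hd (c+1)
          have h6 := mul_le_mul_of_nonneg_left h3 hlam0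
          have h7 := hfin2 (d0 + R) (le_refl _)
          linarith
        · -- x_a ∈ B, x_c ∈ A : indirect via (c, a) swapped
          have h1 := key' a c (Or.inr ⟨hc, ha⟩)
          have h2 : dist (T^[a] x) (T^[c] x) ≤ d0 + R := haux a c (by omega)
          have h3 : max (dist (T^[a] x) (T^[c] x))
              (max (dist (T^[a] x) (T^[a+1] x)) (dist (T^[c] x) (T^[c+1] x))) ≤ d0 + R :=
            max_le h2 (max_le hdA hdC)
          have h4 : dist (T^[a+1] x) (T^[c+1+1] x)
              ≤ dist (T^[a+1] x) (T^[c+1] x) + dist (T^[c+1] x) (T^[c+1+1] x) :=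
            dist_triangle _ _ _
          have h5 := hd (c+1)
          have h6 := mul_le_mul_of_nonneg_left h3 hlam0
          have h7 := hfin2 (d0 + R) (le_refl _)
          linarith
        · -- x_a ∈ B, x_c ∈ B : x_{c+1} ∈ A, direct swapped
          have hc1 : T^[c+1] x ∈ A := by
            rw [Function.iterate_succ_apply']; exact hTB _ hc
          have h1 := key' a (c+1) (Or.inr ⟨hc1, ha⟩)
          have h2 : dist (T^[a] x) (T^[c+1] x) ≤ d0 + R := haux a (c+1) (by omega)
          have h3 : max (dist (T^[a] x) (T^[c+1] x))
              (max (dist (T^[a] x) (T^[a+1] x)) (dist (T^[c+1] x) (T^[c+1+1] x))) ≤ d0 + R :=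
            max_le h2 (max_le hdA hdC1)
          calc dist (T^[a+1] x) (T^[c+1+1] x) ≤ _ := h1
            _ ≤ lam * (d0 + R) + (1 - lam) * D := by
              have := mul_le_mul_of_nonneg_left h3 hlam0; linarith
            _ ≤ R := hfin1 _ (le_refl _)
      rcases lt_trichotomy i j with h | h | h
      · exact hcore i j hi h hij
      · subst h; simpa using hR0
      · rw [dist_comm]; exact hcore j i hj h (by omega)
  refine ⟨T x, R, fun n hn => ?_⟩
  have := main (n + 1) n 1 hn le_rfl (by omega)
  simpa using this
end

section
/- Let (X, ρ) be a metric space, A, B ⊂ X, and F : (A×A) ∪ (B×B) → X with F(A×A) ⊆ B and F(B×B) ⊆ A, satisfying ρ(F(x,x'), F(y,y')) ≤ α·ρ(x,y) + β·ρ(x',y') + (1−α−β)·dist(A,B) for all x,x' ∈ A, y,y' ∈ B, where α, β ≥ 0 and α + β < 1. Define T : X×X → X×X by T(x,y) = (F(x,y), F(y,x)) on the relevant domains and equip X×X with the metric d((x,y),(u,v)) = ρ(x,u) + ρ(y,v). Then T is a cyclic map from (A×A) ∪ (B×B) to itself (T(A×A) ⊆ B×B, T(B×B) ⊆ A×A)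 and satisfies d(Tp, Tq) ≤ (α+β)·d(p,q) + (1−(α+β))·dist(A×A, B×B) for all p ∈ A×A, q ∈ B×B. -/
open Filter Topology

/-- dist(A×A, B×B) with respect to the sum metric d((x,y),(u,v)) = ρ(x,u) + ρ(y,v). -/
noncomputable def SetDistProdSum {X : Type*} [MetricSpace X] (A B : Set X) : ℝ :=
  sInf (Set.image2 (fun p q : X × X => dist p.1 q.1 + dist p.2 q.2) (A ×ˢ A) (B ×ˢ B))

theorem stmt7 {X : Type*} [MetricSpace X] (A B : Set X) (F : X → X → X)
    (hFA : ∀ x ∈ A, ∀ x' ∈ A, F x x' ∈ B) (hFB : ∀ y ∈ B, ∀ y' ∈ B, F y y' ∈ A)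
    (α β : ℝ) (hα : 0 ≤ α) (hβ : 0 ≤ β) (hαβ : α + β < 1)
    (hF : ∀ x ∈ A, ∀ x' ∈ A, ∀ y ∈ B, ∀ y' ∈ B,
      dist (F x x') (F y y') ≤ α * dist x y + β * dist x' y' + (1 - (α + β)) * SetDist A B) :
    (∀ p ∈ A ×ˢ A, (F p.1 p.2, F p.2 p.1) ∈ B ×ˢ B) ∧
    (∀ q ∈ B ×ˢ B, (F q.1 q.2, F q.2 q.1) ∈ A ×ˢ A) ∧
    (∀ p ∈ A ×ˢ A, ∀ q ∈ B ×ˢ B,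
      dist (F p.1 p.2) (F q.1 q.2) + dist (F p.2 p.1) (F q.2 q.1) ≤
        (α + β) * (dist p.1 q.1 + dist p.2 q.2) + (1 - (α + β)) * SetDistProdSum A B) := by
  refine ⟨fun p hp => ⟨hFA p.1 hp.1 p.2 hp.2, hFA p.2 hp.2 p.1 hp.1⟩,
    fun q hq => ⟨hFB q.1 hq.1 q.2 hq.2, hFB q.2 hq.2 q.1 hq.1⟩, ?_⟩
  intro p hp q hq
  have hd : ∀ a ∈ A, ∀ b ∈ B, SetDist A B ≤ dist a b := by
    intro a ha b hb
    exact csInf_le ⟨0, fun r hr => by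
      obtain ⟨x, hx, y, hy, rfl⟩ := hr; exact dist_nonneg⟩ (Set.mem_image2_of_mem ha hb)
  have h2 : 2 * SetDist A B ≤ SetDistProdSum A B := by
    apply le_csInf
    · exact ⟨_, Set.mem_image2_of_mem (Set.mk_mem_prod hp.1 hp.2) (Set.mk_mem_prod hq.1 hq.2)⟩
    · rintro r ⟨x, hx, y, hy, rfl⟩
      have := hd x.1 hx.1 y.1 hy.1
      have := hd x.2 hx.2 y.2 hy.2
      dsimp only
      linarith
  have h1 := hF p.1 hp.1 p.2 hp.2 q.1 hq.1 q.2 hq.2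
  have h2' := hF p.2 hp.2 p.1 hp.1 q.2 hq.2 q.1 hq.1
  nlinarith [h2, hαβ]
end

section
/- Let (X, ‖·‖) be a normed space and A, B ⊂ X with A a uniformly convex set, meaning: for every ε > 0 there exists η(ε) > 0 such that for all x, y ∈ A with ‖x − y‖ ≥ ε, the open ball B((x+y)/2, η(ε)) is contained in A. Then the ordered pair (A, B) has the UC property. -/
open Filter Topology

/-- A uniformly convex set in a normed space. -/
def UniformlyConvexSet {X : Type*} [NormedAddCommGroup X] [NormedSpace ℝ X] (A : Set X) : Prop :=
  ∀ ε > (0 : ℝ), ∃ η > (0 : ℝ), ∀ x ∈ A, ∀ y ∈ A, ε ≤ ‖x - y‖ →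
    Metric.ball ((1 / 2 : ℝ) • (x + y)) η ⊆ A

theorem stmt8 {X : Type*} [NormedAddCommGroup X] [NormedSpace ℝ X] (A B : Set X)
    (hA : UniformlyConvexSet A) : UCprop A B := by
  intro x z y hx hz hy hxy hzy
  set d := SetDist A B with hdd
  have hbdd : BddBelow (Set.image2 dist A B) := by
    refine ⟨0, ?_⟩
    rintro r ⟨a, ha, b, hb, rfl⟩
    exact dist_nonneg
  have hle : ∀ a ∈ A, ∀ b ∈ B, d ≤ dist a b := fun a ha b hb =>
    csInf_le hbdd ⟨a, ha, b, hb, rfl⟩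
  have hd0 : 0 ≤ d := by
    refine le_csInf ⟨dist (x 0) (y 0), ⟨x 0, hx 0, y 0, hy 0, rfl⟩⟩ ?_
    rintro r ⟨a, _, b, _, rfl⟩
    exact dist_nonneg
  rcases eq_or_lt_of_le hd0 with h0 | hdpos
  · -- d = 0 : use triangle inequality
    have hsum : Tendsto (fun n => dist (x n) (y n) + dist (z n) (y n)) atTop (𝓝 0) := by
      have := hxy.add hzy
      rwa [← h0, add_zero] at this
    apply squeeze_zero (fun n => dist_nonneg) (fun n => ?_) hsum
    calc dist (x n) (z n) ≤ dist (x n) (y n) + dist (y n) (z n) := dist_triangle _ _ _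
      _ = dist (x n) (y n) + dist (z n) (y n) := by rw [dist_comm (y n)]
  · -- d > 0
    rw [Metric.tendsto_atTop]
    intro ε hε
    obtain ⟨η, hη, hball⟩ := hA ε hε
    -- eventually dist x y < d + η/4 and dist z y < d + η/4
    have h1 : ∀ᶠ n in atTop, dist (x n) (y n) < d + η / 4 := by
      have := Metric.tendsto_atTop.mp hxy (η / 4) (by linarith)
      obtain ⟨N, hN⟩ := this
      refine eventually_atTop.mpr ⟨N, fun n hn => ?_⟩
      have := hN n hn
      rw [Real.dist_eq, abs_lt] at this
      linarith [this.2]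
    have h2 : ∀ᶠ n in atTop, dist (z n) (y n) < d + η / 4 := by
      have := Metric.tendsto_atTop.mp hzy (η / 4) (by linarith)
      obtain ⟨N, hN⟩ := this
      refine eventually_atTop.mpr ⟨N, fun n hn => ?_⟩
      have := hN n hn
      rw [Real.dist_eq, abs_lt] at this
      linarith [this.2]
    obtain ⟨N, hN⟩ := eventually_atTop.mp (h1.and h2)
    refine ⟨N, fun n hn => ?_⟩
    obtain ⟨hn1, hn2⟩ := hN n hn
    rw [Real.dist_eq, sub_zero, abs_of_nonneg dist_nonneg]
    by_contra hcon
    push_neg at hcon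
    have hεxz : ε ≤ ‖x n - z n‖ := by rwa [← dist_eq_norm]
    have hb := hball (x n) (hx n) (z n) (hz n) hεxz
    set m := (1 / 2 : ℝ) • (x n + z n) with hm
    set b := y n with hbdef
    -- case: b close to m
    by_cases hcase : ‖m - b‖ < η
    · have hbA : b ∈ A := hb (by rw [Metric.mem_ball, dist_eq_norm, norm_sub_rev]; exact hcase)
      have : d ≤ 0 := by simpa using hle b hbA b (hy n)
      linarith
    · push_neg at hcase
      have hmb : (0:ℝ) < ‖m - b‖ := lt_of_lt_of_le hη hcase
      have hmbne : ‖b - m‖ ≠ 0 := by rw [norm_sub_rev]; exact ne_of_gt hmb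
      set t : ℝ := η / (2 * ‖b - m‖) with ht
      have htpos : 0 < t := by
        apply div_pos hη
        rw [norm_sub_rev]
        linarith
      set a : X := m + t • (b - m) with ha
      have hanorm : ‖a - m‖ = η / 2 := by
        rw [ha, add_sub_cancel_left, norm_smul, Real.norm_eq_abs, abs_of_pos htpos, ht]
        field_simp
      have haA : a ∈ A := hb (by
        rw [Metric.mem_ball, dist_eq_norm, hanorm]
        linarith)
      have habt : a - b = (1 - t) • (m - b) := by
        rw [ha]; module
      have ht1 : t ≤ 1 := by
        rw [ht, div_le_one (by rw [norm_sub_rev]; linarith)]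
        rw [norm_sub_rev]
        linarith
      have hab : ‖a - b‖ = ‖m - b‖ - η / 2 := by
        rw [habt, norm_smul, Real.norm_eq_abs, abs_of_nonneg (by linarith), ht]
        rw [norm_sub_rev m b]
        field_simp
      have hdab : d ≤ ‖m - b‖ - η / 2 := by
        have := hle a haA b (hy n)
        rwa [dist_eq_norm, hab] at this
      -- m - b = (1/2) • ((x n - b) + (z n - b))
      have hmid : m - b = (1 / 2 : ℝ) • ((x n - b) + (z n - b)) := by
        rw [hm]; module
      have hmble : ‖m - b‖ ≤ (dist (x n) b + dist (z n) b) / 2 := by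
        rw [hmid, norm_smul, Real.norm_eq_abs, dist_eq_norm, dist_eq_norm]
        have := norm_add_le (x n - b) (z n - b)
        rw [abs_of_nonneg (by norm_num : (0:ℝ) ≤ 1/2)]
        linarith
      linarith
end

section
/- Let (X, ‖·‖) be a Banach space, A = B_X the closed unit ball, and B = {x ∈ X : ‖x‖ ≥ 2}. Suppose X is nontrivial (so B is nonempty) and the ordered pair (B_X, B) satisfies the UC property. If {x_n}, {z_n} ⊂ B_X are sequences with lim_{n→∞} ‖(x_n + z_n)/2‖ = 1, then lim_{n→∞} ‖x_n − z_n‖ = 0. -/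
open Filter Topology

/-! With `y` the point of norm `2` on the ray through `x + z`, the triangle inequality gives
`1 ≤ ‖x - y‖ ≤ ‖z‖ + ‖x + z - y‖ ≤ 1 + |‖x + z‖ - 2|`, and likewise for `z`. So when the
midpoints of `x n` and `z n` tend to the unit sphere, `x n` and `z n` are both asymptotically
nearest points of the ball to `y n`, and the UC property forces `‖x n - z n‖ → 0`. -/

lemma sub_le_dist_of_norm_le_of_le_norm {X : Type*} [SeminormedAddCommGroup X] {a b : X}
    {r R : ℝ} (ha : ‖a‖ ≤ r) (hb : R ≤ ‖b‖) : R - r ≤ dist a b := by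
  rw [dist_comm, dist_eq_norm]
  linarith [norm_sub_norm_le b a]

lemma tendsto_dist_of_tendsto_norm_add_sub {X : Type*} [SeminormedAddCommGroup X]
    {x z y : ℕ → X} {r : ℝ}
    (hx : ∀ n, ‖x n‖ ≤ r) (hz : ∀ n, ‖z n‖ ≤ r) (hy : ∀ n, 2 * r ≤ ‖y n‖)
    (hxzy : Tendsto (fun n => ‖x n + z n - y n‖) atTop (𝓝 0)) :
    Tendsto (fun n => dist (x n) (y n)) atTop (𝓝 r) := by
  have hlower : ∀ n, r ≤ dist (x n) (y n) := fun n => by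
    linarith [sub_le_dist_of_norm_le_of_le_norm (hx n) (hy n)]
  have hupper : ∀ n, dist (x n) (y n) ≤ r + ‖x n + z n - y n‖ := fun n =>
    calc dist (x n) (y n) = ‖(x n + z n - y n) - z n‖ := by rw [dist_eq_norm]; abel_nf
      _ ≤ ‖x n + z n - y n‖ + ‖z n‖ := norm_sub_le _ _
      _ ≤ r + ‖x n + z n - y n‖ := by linarith [hz n]
  refine tendsto_of_tendsto_of_tendsto_of_le_of_le tendsto_const_nhds ?_ hlower hupper
  simpa using hxzy.const_add r

section

variable {X : Type*} [NormedAddCommGroup X] [NormedSpace ℝ X]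

lemma setDist_closedBall_setOf_le_norm [Nontrivial X] {r R : ℝ} (hr : 0 ≤ r) (hrR : r ≤ R) :
    SetDist (Metric.closedBall (0 : X) r) {x | R ≤ ‖x‖} = R - r := by
  obtain ⟨u, hu⟩ := exists_norm_eq X zero_le_one
  have hR : 0 ≤ R := hr.trans hrR
  have hlb : ∀ d ∈ Set.image2 dist (Metric.closedBall (0 : X) r) {x | R ≤ ‖x‖}, R - r ≤ d := by
    rintro d ⟨a, ha, b, hb, rfl⟩
    exact sub_le_dist_of_norm_le_of_le_norm (mem_closedBall_zero_iff.mp ha) hb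
  have hattained : R - r ∈ Set.image2 dist (Metric.closedBall (0 : X) r) {x | R ≤ ‖x‖} := by
    refine ⟨r • u, ?_, R • u, ?_, ?_⟩
    · simp [norm_smul, hu, abs_of_nonneg hr]
    · simp [norm_smul, hu, abs_of_nonneg hR]
    · rw [dist_eq_norm, ← sub_smul, norm_smul, hu, Real.norm_eq_abs, abs_sub_comm,
        abs_of_nonneg (sub_nonneg.mpr hrR), mul_one]
  exact IsLeast.csInf_eq ⟨hattained, hlb⟩

lemma exists_norm_eq_and_norm_sub_eq [Nontrivial X] (v : X) {R : ℝ} (hR : 0 ≤ R) :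
    ∃ y : X, ‖y‖ = R ∧ ‖v - y‖ = |‖v‖ - R| := by
  by_cases hv : v = 0
  · obtain ⟨y, hy⟩ := exists_norm_eq X hR
    exact ⟨y, hy, by simp [hv, hy, abs_of_nonneg hR]⟩
  · have hv' : ‖v‖ ≠ 0 := norm_ne_zero_iff.mpr hv
    refine ⟨(R / ‖v‖) • v, ?_, ?_⟩
    · rw [norm_smul, Real.norm_eq_abs, abs_of_nonneg (by positivity), div_mul_cancel₀ _ hv']
    · have : v - (R / ‖v‖) • v = ((‖v‖ - R) / ‖v‖) • v := by
        rw [← one_sub_div hv', sub_smul, one_smul]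
      rw [this, norm_smul, Real.norm_eq_abs, abs_div, abs_norm, div_mul_cancel₀ _ hv']

lemma exists_norm_eq_and_tendsto_norm_sub [Nontrivial X] {v : ℕ → X} {R : ℝ} (hR : 0 ≤ R)
    (hv : Tendsto (fun n => ‖v n‖) atTop (𝓝 R)) :
    ∃ y : ℕ → X, (∀ n, ‖y n‖ = R) ∧ Tendsto (fun n => ‖v n - y n‖) atTop (𝓝 0) := by
  choose y hyR hy using fun n => exists_norm_eq_and_norm_sub_eq (v n) hR
  refine ⟨y, hyR, ?_⟩
  simp_rw [hy]
  simpa using (hv.sub_const R).abs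

end

theorem stmt12_general {X : Type*} [NormedAddCommGroup X] [NormedSpace ℝ X]
    [Nontrivial X]
    (hUC : UCprop (Metric.closedBall (0 : X) 1) {x : X | 2 ≤ ‖x‖})
    (x z : ℕ → X)
    (hx : ∀ n, x n ∈ Metric.closedBall (0 : X) 1)
    (hz : ∀ n, z n ∈ Metric.closedBall (0 : X) 1)
    (hmid : Tendsto (fun n => ‖(1 / 2 : ℝ) • (x n + z n)‖) atTop (𝓝 1)) :
    Tendsto (fun n => ‖x n - z n‖) atTop (𝓝 0) := by
  have hsum : Tendsto (fun n => ‖x n + z n‖) atTop (𝓝 2) := by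
    have h := hmid.const_mul 2
    simp only [norm_smul, Real.norm_eq_abs] at h
    norm_num at h
    simpa [← mul_assoc] using h
  obtain ⟨y, hy2, hxzy⟩ := exists_norm_eq_and_tendsto_norm_sub zero_le_two hsum
  have hx1 : ∀ n, ‖x n‖ ≤ 1 := fun n => mem_closedBall_zero_iff.mp (hx n)
  have hz1 : ∀ n, ‖z n‖ ≤ 1 := fun n => mem_closedBall_zero_iff.mp (hz n)
  have hy : ∀ n, 2 * 1 ≤ ‖y n‖ := fun n => by rw [hy2]; norm_num
  have hdist : SetDist (Metric.closedBall (0 : X) 1) {x : X | 2 ≤ ‖x‖} = 1 := by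
    rw [setDist_closedBall_setOf_le_norm zero_le_one one_le_two]; norm_num
  have hzxy : Tendsto (fun n => ‖z n + x n - y n‖) atTop (𝓝 0) := by
    simpa only [add_comm] using hxzy
  have hUCxz := hUC x z y hx hz (fun n => (hy2 n).ge)
  rw [hdist] at hUCxz
  simpa [dist_eq_norm] using hUCxz (tendsto_dist_of_tendsto_norm_add_sub hx1 hz1 hy hxzy)
    (tendsto_dist_of_tendsto_norm_add_sub hz1 hx1 hy hzxy)

theorem stmt12 {X : Type*} [NormedAddCommGroup X] [NormedSpace ℝ X] [CompleteSpace X]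
    [Nontrivial X]
    (hUC : UCprop (Metric.closedBall (0 : X) 1) {x : X | 2 ≤ ‖x‖})
    (x z : ℕ → X)
    (hx : ∀ n, x n ∈ Metric.closedBall (0 : X) 1)
    (hz : ∀ n, z n ∈ Metric.closedBall (0 : X) 1)
    (hmid : Tendsto (fun n => ‖(1 / 2 : ℝ) • (x n + z n)‖) atTop (𝓝 1)) :
    Tendsto (fun n => ‖x n - z n‖) atTop (𝓝 0) :=
  stmt12_general hUC x z hx hz hmid
end

section
/- Let (X, ‖·‖) be a nontrivial Banach space and B = {x ∈ X : ‖x‖ ≥ 2}. If the ordered pair (B_X, B) satisfies the UC property, then X is uniformly convex. -/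
open Filter Topology

lemma mySetDist_one {X : Type*} [NormedAddCommGroup X] [NormedSpace ℝ X] [Nontrivial X] :
    SetDist (Metric.closedBall (0 : X) 1) {x : X | 2 ≤ ‖x‖} = 1 := by
  obtain ⟨u, hu⟩ := exists_norm_eq X (zero_le_one (α := ℝ))
  have hlow : ∀ r ∈ Set.image2 dist (Metric.closedBall (0 : X) 1) {x : X | 2 ≤ ‖x‖},
      (1 : ℝ) ≤ r := by
    rintro r ⟨a, ha, b, hb, rfl⟩
    rw [Metric.mem_closedBall, dist_zero_right] at ha
    have hb' : (2 : ℝ) ≤ ‖b‖ := hb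
    have : ‖b‖ - ‖a‖ ≤ ‖b - a‖ := norm_sub_norm_le _ _
    rw [dist_eq_norm, ← norm_neg]
    simp only [neg_sub]
    linarith
  have hmem : (1 : ℝ) ∈ Set.image2 dist (Metric.closedBall (0 : X) 1) {x : X | 2 ≤ ‖x‖} := by
    refine ⟨u, ?_, (2 : ℝ) • u, ?_, ?_⟩
    · simp [Metric.mem_closedBall, hu]
    · simp [norm_smul, hu]
    · rw [dist_eq_norm]
      have : u - (2 : ℝ) • u = -u := by module
      rw [this, norm_neg, hu]
  refine le_antisymm (csInf_le ⟨1, hlow⟩ hmem) (le_csInf ⟨1, hmem⟩ hlow)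

theorem stmt13 {X : Type*} [NormedAddCommGroup X] [NormedSpace ℝ X] [CompleteSpace X]
    [Nontrivial X]
    (hUC : UCprop (Metric.closedBall (0 : X) 1) {x : X | 2 ≤ ‖x‖}) :
    ∀ ε : ℝ, 0 < ε → ε ≤ 2 → ∃ δ > (0 : ℝ),
      ∀ x ∈ Metric.closedBall (0 : X) 1, ∀ y ∈ Metric.closedBall (0 : X) 1,
        ε ≤ ‖x - y‖ → ‖(1 / 2 : ℝ) • (x + y)‖ ≤ 1 - δ := by
  intro ε hε hε2
  by_contra hcon
  push_neg at hcon
  choose x hx z hz hxz hn using fun n : ℕ => hcon (1 / (n + 2)) (by positivity)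
  -- norms ≤ 1
  have hx1 : ∀ n, ‖x n‖ ≤ 1 := fun n => by
    have := hx n; rwa [Metric.mem_closedBall, dist_zero_right] at this
  have hz1 : ∀ n, ‖z n‖ ≤ 1 := fun n => by
    have := hz n; rwa [Metric.mem_closedBall, dist_zero_right] at this
  set s : ℕ → X := fun n => x n + z n with hs
  have hslow : ∀ n, 2 - 2 / (n + 2) < ‖s n‖ := by
    intro n
    have h1 := hn n
    rw [norm_smul, Real.norm_eq_abs, abs_of_pos (by norm_num : (0:ℝ) < 1/2)] at h1
    have h2 : ‖s n‖ = ‖x n + z n‖ := rfl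
    rw [h2]
    have h3 : (2:ℝ) / ((n:ℝ) + 2) = 2 * (1 / ((n:ℝ) + 2)) := by ring
    rw [h3]
    linarith
  have hspos : ∀ n, 0 < ‖s n‖ := by
    intro n
    have h2 : (2 : ℝ) / (n + 2) ≤ 1 := by
      rw [div_le_one (by positivity)]
      have : (0 : ℝ) ≤ (n : ℝ) := Nat.cast_nonneg n
      linarith
    have := hslow n
    linarith
  have hsup : ∀ n, ‖s n‖ ≤ 2 := by
    intro n
    calc ‖s n‖ ≤ ‖x n‖ + ‖z n‖ := norm_add_le _ _
    _ ≤ 2 := by have := hx1 n; have := hz1 n; linarith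
  set l : ℕ → ℝ := fun n => 2 / ‖s n‖ with hl
  have hl1 : ∀ n, 1 ≤ l n := fun n => by
    rw [hl]; beta_reduce; rw [le_div_iff₀ (hspos n)]; simpa using hsup n
  set y : ℕ → X := fun n => (l n) • s n with hy
  have hy2 : ∀ n, ‖y n‖ = 2 := by
    intro n
    have h0 : (0:ℝ) < l n := by linarith [hl1 n]
    have h1 : ‖y n‖ = l n * ‖s n‖ := by
      rw [show y n = l n • s n from rfl, norm_smul, Real.norm_eq_abs, abs_of_pos h0]
    rw [h1]
    exact div_mul_cancel₀ 2 (hspos n).ne'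
  have hyB : ∀ n, y n ∈ {x : X | 2 ≤ ‖x‖} := fun n => by
    simp [Set.mem_setOf_eq, hy2 n]
  -- tendsto of 2/(n+2) to 0
  have haux : Tendsto (fun n : ℕ => (2 : ℝ) / (n + 2)) atTop (𝓝 0) := by
    have h1 : Tendsto (fun n : ℕ => ((n : ℝ) + 2)) atTop atTop :=
      tendsto_atTop_add_const_right _ 2 tendsto_natCast_atTop_atTop
    simpa [div_eq_mul_inv] using h1.inv_tendsto_atTop.const_mul (2 : ℝ)
  have hsnorm : Tendsto (fun n => ‖s n‖) atTop (𝓝 2) := by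
    have h1 : Tendsto (fun n : ℕ => 2 - (2 : ℝ) / (n + 2)) atTop (𝓝 2) := by
      simpa using tendsto_const_nhds.sub haux
    exact tendsto_of_tendsto_of_tendsto_of_le_of_le h1 tendsto_const_nhds
      (fun n => (hslow n).le) hsup
  have hltend : Tendsto l atTop (𝓝 1) := by
    have := (tendsto_const_nhds (x := (2:ℝ)) (f := atTop (α := ℕ))).div hsnorm (by norm_num)
    rw [div_self (by norm_num : (2:ℝ) ≠ 0)] at this
    exact this
  -- key distance bound
  have hdistb : ∀ (w : ℕ → X), (∀ n, ‖w n‖ ≤ 1) → (∀ n, y n = l n • (w n + (s n - w n))) →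
      True := fun _ _ _ => trivial
  have hkey : ∀ (a b : ℕ → X), (∀ n, ‖a n‖ ≤ 1) → (∀ n, ‖b n‖ ≤ 1) →
      (∀ n, s n = a n + b n) →
      Tendsto (fun n => dist (a n) (y n)) atTop (𝓝 1) := by
    intro a b ha hb hab
    have hup : ∀ n, dist (a n) (y n) ≤ 2 * l n - 1 := by
      intro n
      rw [dist_eq_norm]
      have heq : a n - y n = (1 - l n) • a n - l n • b n := by
        rw [show y n = l n • s n from rfl, hab n]; module
      rw [heq]
      calc ‖(1 - l n) • a n - l n • b n‖ ≤ ‖(1 - l n) • a n‖ + ‖l n • b n‖ :=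
            norm_sub_le _ _
        _ = |1 - l n| * ‖a n‖ + |l n| * ‖b n‖ := by
            simp [norm_smul, Real.norm_eq_abs]
        _ ≤ (l n - 1) * 1 + l n * 1 := by
            have h1 := hl1 n
            have h2 : |1 - l n| = l n - 1 := by rw [abs_of_nonpos (by linarith)]; ring
            have h3 : |l n| = l n := abs_of_pos (by linarith)
            rw [h2, h3]
            have := ha n; have := hb n
            gcongr <;> linarith
        _ = 2 * l n - 1 := by ring
    have hlo : ∀ n, 1 ≤ dist (a n) (y n) := by
      intro n
      rw [dist_eq_norm, ← norm_neg]
      simp only [neg_sub]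
      have : ‖y n‖ - ‖a n‖ ≤ ‖y n - a n‖ := norm_sub_norm_le _ _
      have := ha n
      rw [hy2 n] at *
      linarith [norm_sub_norm_le (y n) (a n), hy2 n, ha n]
    have hup' : Tendsto (fun n => 2 * l n - 1) atTop (𝓝 (2 * 1 - 1)) :=
      (hltend.const_mul (2 : ℝ)).sub tendsto_const_nhds
    norm_num at hup'
    exact tendsto_of_tendsto_of_tendsto_of_le_of_le tendsto_const_nhds hup' hlo hup
  have hsd := mySetDist_one (X := X)
  have hd1 : Tendsto (fun n => dist (x n) (y n)) atTop
      (𝓝 (SetDist (Metric.closedBall (0 : X) 1) {x : X | 2 ≤ ‖x‖})) := by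
    rw [hsd]; exact hkey x z hx1 hz1 (fun n => rfl)
  have hd2 : Tendsto (fun n => dist (z n) (y n)) atTop
      (𝓝 (SetDist (Metric.closedBall (0 : X) 1) {x : X | 2 ≤ ‖x‖})) := by
    rw [hsd]
    exact hkey z x hz1 hx1 (fun n => by rw [hs]; abel)
  have hfinal := hUC x z y hx hz hyB hd1 hd2
  have : ε ≤ 0 := ge_of_tendsto' hfinal (fun n => by
    rw [dist_eq_norm]; exact hxz n)
  linarith
end

section
/- Let (X, ‖·‖) be a Banach space and B ⊂ X \ B_X with dist(B, B_X) ≥ 1. Suppose (B_X, B) satisfies the UC property and there exists p ∈ B with dist(p, B_X) = dist(B, B_X). If {x_n}, {z_n} ⊂ B_X satisfy lim_{n→∞} ‖(x_n + z_n)/2‖ = 1 and for each n there is λ_n ∈ ℝ with x_n + z_n = |λ_n|·p, then lim_{n→∞} ‖x_n − z_n‖ = 0. -/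
open Filter Topology

lemma SetDist_comm {X : Type*} [MetricSpace X] (A B : Set X) : SetDist A B = SetDist B A := by
  unfold SetDist
  congr 1
  rw [Set.image2_swap]
  simp [dist_comm]

theorem stmt14 {X : Type*} [NormedAddCommGroup X] [NormedSpace ℝ X] [CompleteSpace X]
    (B : Set X) (hBsub : B ⊆ (Metric.closedBall (0 : X) 1)ᶜ)
    (hBdist : 1 ≤ SetDist B (Metric.closedBall (0 : X) 1))
    (hUC : UCprop (Metric.closedBall (0 : X) 1) B)
    (p : X) (hp : p ∈ B)
    (hpdist : Metric.infDist p (Metric.closedBall (0 : X) 1) =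
      SetDist B (Metric.closedBall (0 : X) 1))
    (x z : ℕ → X)
    (hx : ∀ n, x n ∈ Metric.closedBall (0 : X) 1)
    (hz : ∀ n, z n ∈ Metric.closedBall (0 : X) 1)
    (hmid : Tendsto (fun n => ‖(1 / 2 : ℝ) • (x n + z n)‖) atTop (𝓝 1))
    (lam : ℕ → ℝ) (hlam : ∀ n, x n + z n = |lam n| • p) :
    Tendsto (fun n => ‖x n - z n‖) atTop (𝓝 0) := by
  set d := SetDist B (Metric.closedBall (0 : X) 1) with hd
  have hpnorm : 1 < ‖p‖ := by
    have := hBsub hp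
    simp [Metric.mem_closedBall] at this
    simpa using this
  have hp0 : ‖p‖ ≠ 0 := by positivity
  -- infDist p ball = ‖p‖ - 1
  have hinf : Metric.infDist p (Metric.closedBall (0 : X) 1) = ‖p‖ - 1 := by
    apply le_antisymm
    · have hmem : (‖p‖⁻¹ : ℝ) • p ∈ Metric.closedBall (0 : X) 1 := by
        simp [Metric.mem_closedBall, norm_smul, abs_of_nonneg (inv_nonneg.2 (norm_nonneg p)),
          inv_mul_cancel₀ hp0]
      calc Metric.infDist p (Metric.closedBall (0 : X) 1) ≤ dist p ((‖p‖⁻¹ : ℝ) • p) :=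
            Metric.infDist_le_dist_of_mem hmem
        _ = ‖p‖ - 1 := by
            rw [dist_eq_norm]
            have : p - (‖p‖⁻¹ : ℝ) • p = (1 - ‖p‖⁻¹) • p := by
              rw [sub_smul, one_smul]
            rw [this, norm_smul, Real.norm_eq_abs,
              abs_of_nonneg (by rw [sub_nonneg]; exact inv_le_one_of_one_le₀ hpnorm.le)]
            field_simp
    · by_contra h
      push_neg at h
      obtain ⟨a, ha, hda⟩ := (Metric.infDist_lt_iff ⟨0, by simp⟩).1 h
      rw [Metric.mem_closedBall, dist_zero_right] at ha
      rw [dist_eq_norm] at hda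
      have := norm_sub_norm_le p a
      linarith
  have hdp : ‖p‖ = d + 1 := by rw [← hpdist, hinf]; ring
  have hp2 : 2 ≤ ‖p‖ := by rw [hdp]; linarith
  -- limit of |lam|
  have hL : Tendsto (fun n => |lam n|) atTop (𝓝 (2 / ‖p‖)) := by
    have h1 : Tendsto (fun n => |lam n| * ‖p‖) atTop (𝓝 2) := by
      have : (fun n => |lam n| * ‖p‖) = fun n => 2 * ‖(1 / 2 : ℝ) • (x n + z n)‖ := by
        funext n
        rw [hlam n, norm_smul, norm_smul]
        simp only [Real.norm_eq_abs, abs_abs]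
        rw [abs_of_nonneg (by norm_num : (0:ℝ) ≤ 1/2)]
        ring
      rw [this]
      simpa using hmid.const_mul 2
    have := h1.mul_const (‖p‖⁻¹)
    simp only [mul_assoc, mul_inv_cancel₀ hp0, mul_one] at this
    simpa [div_eq_mul_inv] using this
  -- limit of the upper bound
  have hU : Tendsto (fun n => |(|lam n| - 1)| * ‖p‖ + 1) atTop (𝓝 d) := by
    have := (((hL.sub_const 1).abs).mul_const ‖p‖).add_const 1
    have heq : |2 / ‖p‖ - 1| * ‖p‖ + 1 = d := by
      have h2p : 2 / ‖p‖ ≤ 1 := by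
        rw [div_le_one (by linarith)]; exact hp2
      rw [abs_of_nonpos (by linarith), neg_sub, sub_mul, one_mul,
        div_mul_cancel₀ _ hp0, hdp]
      ring
    rwa [heq] at this
  -- lower bound : d ≤ dist (x n) p for x n in ball
  have hlow : ∀ (w : X), w ∈ Metric.closedBall (0 : X) 1 → d ≤ dist w p := by
    intro w hw
    rw [dist_comm]
    exact csInf_le ⟨0, fun r hr => by
      obtain ⟨a, _, b, _, rfl⟩ := hr; exact dist_nonneg⟩ (Set.mem_image2_of_mem hp hw)
  -- upper bound
  have hup : ∀ (n : ℕ) (w v : X), w + v = x n + z n → v ∈ Metric.closedBall (0 : X) 1 →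
      dist w p ≤ |(|lam n| - 1)| * ‖p‖ + 1 := by
    intro n w v hwv hv
    rw [Metric.mem_closedBall, dist_zero_right] at hv
    rw [dist_eq_norm]
    have : w - p = ((x n + z n) - p) - v := by rw [← hwv]; abel
    rw [this]
    calc ‖((x n + z n) - p) - v‖ ≤ ‖(x n + z n) - p‖ + ‖v‖ := norm_sub_le _ _
      _ ≤ |(|lam n| - 1)| * ‖p‖ + 1 := by
          have : (x n + z n) - p = (|lam n| - 1) • p := by
            rw [hlam n, sub_smul, one_smul]
          rw [this, norm_smul, Real.norm_eq_abs]
          linarith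
  have hxp : Tendsto (fun n => dist (x n) p) atTop (𝓝 d) :=
    tendsto_of_tendsto_of_tendsto_of_le_of_le tendsto_const_nhds hU
      (fun n => hlow (x n) (hx n)) (fun n => hup n (x n) (z n) rfl (hz n))
  have hzp : Tendsto (fun n => dist (z n) p) atTop (𝓝 d) :=
    tendsto_of_tendsto_of_tendsto_of_le_of_le tendsto_const_nhds hU
      (fun n => hlow (z n) (hz n)) (fun n => hup n (z n) (x n) (by abel) (hx n))
  have hcomm : SetDist (Metric.closedBall (0 : X) 1) B = d := SetDist_comm _ _
  have := hUC x z (fun _ => p) hx hz (fun _ => hp) (by rwa [hcomm]) (by rwa [hcomm])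
  simpa [dist_eq_norm] using this
end

section
/- In ℝ² with the sup-norm ‖·‖_∞, let A = {(x,y) : x > 0, y ≥ 1/x} and B = {(x,y) : x > −1, y ≤ 1/(x+1) − 1}. Then dist(A, B) = 1 and the ordered pair (A, B) does not satisfy the UC property: there exist sequences {a_n}, {b_n} ⊂ A and {c_n} ⊂ B with lim ‖a_n − c_n‖_∞ = lim ‖b_n − c_n‖_∞ = 1 but ‖a_n − b_n‖_∞ ≥ 1 for all n. -/
open Filter Topology

/-- `ℝ × ℝ` carries the sup norm `‖(x,y)‖ = max |x| |y|` in Mathlib. -/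
theorem stmt16 :
    let A : Set (ℝ × ℝ) := {p | 0 < p.1 ∧ 1 / p.1 ≤ p.2}
    let B : Set (ℝ × ℝ) := {p | -1 < p.1 ∧ p.2 ≤ 1 / (p.1 + 1) - 1}
    SetDist A B = 1 ∧ ¬ UCprop A B ∧
      ∃ (a b : ℕ → ℝ × ℝ) (c : ℕ → ℝ × ℝ),
        (∀ n, a n ∈ A) ∧ (∀ n, b n ∈ A) ∧ (∀ n, c n ∈ B) ∧
        Tendsto (fun n => ‖a n - c n‖) atTop (𝓝 1) ∧
        Tendsto (fun n => ‖b n - c n‖) atTop (𝓝 1) ∧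
        ∀ n, 1 ≤ ‖a n - b n‖ := by
  intro A B
  -- sequences
  set a : ℕ → ℝ × ℝ := fun n => ((n : ℝ) + 1, 1 / ((n : ℝ) + 1)) with ha
  set b : ℕ → ℝ × ℝ := fun n => ((n : ℝ) + 2, 1 / ((n : ℝ) + 2)) with hb
  set c : ℕ → ℝ × ℝ := fun n => ((n : ℝ) + 1, 1 / ((n : ℝ) + 2) - 1) with hc
  have hn1 : ∀ n : ℕ, (0 : ℝ) < (n : ℝ) + 1 := fun n => by positivity
  have hn2 : ∀ n : ℕ, (0 : ℝ) < (n : ℝ) + 2 := fun n => by positivity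
  have haA : ∀ n, a n ∈ A := fun n => ⟨hn1 n, le_refl _⟩
  have hbA : ∀ n, b n ∈ A := fun n => ⟨hn2 n, le_refl _⟩
  have hcB : ∀ n, c n ∈ B := by
    intro n
    refine ⟨by have := hn1 n; simp only [hc]; linarith, ?_⟩
    simp only [hc]
    rw [show (n : ℝ) + 1 + 1 = (n : ℝ) + 2 by ring]
  -- lower bound for dist
  have hlb : ∀ p ∈ A, ∀ q ∈ B, (1 : ℝ) ≤ dist p q := by
    rintro p ⟨hp1, hp2⟩ q ⟨hq1, hq2⟩
    rw [Prod.dist_eq]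
    rcases le_or_gt 1 (dist p.1 q.1) with h | h
    · exact h.trans (le_max_left _ _)
    · refine le_trans ?_ (le_max_right _ _)
      rw [Real.dist_eq] at h ⊢
      have hx : p.1 ≤ q.1 + 1 := by
        have := abs_lt.mp h
        linarith [this.1]
      have h0 : (0 : ℝ) < q.1 + 1 := by linarith
      have hinv : 1 / (q.1 + 1) ≤ 1 / p.1 := one_div_le_one_div_of_le hp1 hx
      have : (1 : ℝ) ≤ p.2 - q.2 := by linarith
      exact this.trans (le_abs_self _)
  -- dist b0 c0 = 1
  have hdist_bc : ∀ n, dist (b n) (c n) = 1 := by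
    intro n
    rw [Prod.dist_eq, Real.dist_eq, Real.dist_eq]
    simp only [hb, hc]
    norm_num
  have hSD : SetDist A B = 1 := by
    apply le_antisymm
    · have : dist (b 0) (c 0) ∈ Set.image2 dist A B :=
        Set.mem_image2_of_mem (hbA 0) (hcB 0)
      have h1 : sInf (Set.image2 dist A B) ≤ dist (b 0) (c 0) :=
        csInf_le ⟨1, by rintro r ⟨p, hp, q, hq, rfl⟩; exact hlb p hp q hq⟩ this
      rw [hdist_bc 0] at h1
      exact h1
    · apply le_csInf ⟨_, Set.mem_image2_of_mem (hbA 0) (hcB 0)⟩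
      rintro r ⟨p, hp, q, hq, rfl⟩
      exact hlb p hp q hq
  -- norm computations
  have hnac : ∀ n, ‖a n - c n‖ = 1 + (1 / ((n : ℝ) + 1) - 1 / ((n : ℝ) + 2)) := by
    intro n
    have h12 : 1 / ((n : ℝ) + 2) ≤ 1 / ((n : ℝ) + 1) :=
      one_div_le_one_div_of_le (hn1 n) (by linarith)
    rw [Prod.norm_def]
    simp only [ha, hc, Prod.fst_sub, Prod.snd_sub]
    rw [Real.norm_eq_abs, Real.norm_eq_abs]
    rw [show ((n : ℝ) + 1) - ((n : ℝ) + 1) = 0 by ring]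
    rw [abs_of_nonneg (by linarith : (0:ℝ) ≤ 1 / ((n:ℝ)+1) - (1 / ((n:ℝ)+2) - 1)), abs_zero,
      max_eq_right (by linarith : (0:ℝ) ≤ 1 / ((n:ℝ)+1) - (1 / ((n:ℝ)+2) - 1))]
    ring
  have hnbc : ∀ n, ‖b n - c n‖ = 1 := by
    intro n
    rw [Prod.norm_def]
    simp only [hb, hc, Prod.fst_sub, Prod.snd_sub]
    rw [Real.norm_eq_abs, Real.norm_eq_abs]
    norm_num
  have hnab : ∀ n, (1 : ℝ) ≤ ‖a n - b n‖ := by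
    intro n
    rw [Prod.norm_def]
    refine le_trans ?_ (le_max_left _ _)
    simp only [ha, hb, Prod.fst_sub]
    rw [Real.norm_eq_abs, show ((n : ℝ) + 1) - ((n : ℝ) + 2) = -1 by ring]
    norm_num
  -- tendsto facts
  have h1t : Tendsto (fun n : ℕ => 1 / ((n : ℝ) + 1)) atTop (𝓝 0) :=
    tendsto_one_div_add_atTop_nhds_zero_nat
  have h2t : Tendsto (fun n : ℕ => 1 / ((n : ℝ) + 2)) atTop (𝓝 0) := by
    refine (h1t.comp (tendsto_add_atTop_nat 1)).congr fun n => ?_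
    simp only [Function.comp]
    push_cast
    ring_nf
  have htac : Tendsto (fun n => ‖a n - c n‖) atTop (𝓝 1) := by
    have : Tendsto (fun n : ℕ => 1 + (1 / ((n:ℝ)+1) - 1 / ((n:ℝ)+2))) atTop (𝓝 (1 + (0 - 0))) :=
      tendsto_const_nhds.add (h1t.sub h2t)
    simp only [sub_zero, add_zero] at this
    exact this.congr fun n => (hnac n).symm
  have htbc : Tendsto (fun n => ‖b n - c n‖) atTop (𝓝 1) := by
    simp only [hnbc]
    exact tendsto_const_nhds
  refine ⟨hSD, ?_, a, b, c, haA, hbA, hcB, htac, htbc, hnab⟩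
  intro H
  have hd : Tendsto (fun n => dist (a n) (b n)) atTop (𝓝 0) := by
    apply H a b c haA hbA hcB
    · rw [hSD]; simpa only [dist_eq_norm] using htac
    · rw [hSD]; simpa only [dist_eq_norm] using htbc
  have := hd.eventually_lt_const zero_lt_one
  rcases this.exists with ⟨n, hn⟩
  rw [dist_eq_norm] at hn
  exact absurd (hnab n) (not_le.mpr hn)
end
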